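/- Let A = M − N be a splitting of A ∈ ℝ^{n×n}, let B ∈ ℝ^{n×n}, b ∈ ℝⁿ, θ ∈ [0,1), and let Ω ∈ ℝ^{n×n} be such that Ω + M is invertible. If ‖(Ω+M)^{-1}‖ < 1/[θ(‖Ω+M‖ + ‖Ω+N‖ + ‖B‖) + ‖Ω+N‖ + ‖B‖], then the GAVE F(x) = 0 has at most one solution: any x*, y* ∈ ℝⁿ with F(x*) = 0 and F(y*) = 0 satisfy x* = y*. -/

import Mathlib

open Matrix Filter

/-- Componentwise absolute value of a vector in Euclidean space. -/
noncomputable def vabs {n : ℕ} (x : EuclideanSpace ℝ (Fin n)) : EuclideanSpace ℝ (Fin n) :=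
  WithLp.toLp 2 (fun i => |x i|)

/-- A matrix acting on Euclidean space (so that vector norms are the Euclidean 2-norm). -/
noncomputable def mulV {n : ℕ} (M : Matrix (Fin n) (Fin n) ℝ) (x : EuclideanSpace ℝ (Fin n)) :
    EuclideanSpace ℝ (Fin n) :=
  Matrix.toEuclideanCLM (𝕜 := ℝ) M x

/-- Spectral norm of a real matrix: the operator norm induced by the Euclidean vector norm. -/
noncomputable def spec {n : ℕ} (M : Matrix (Fin n) (Fin n) ℝ) : ℝ :=
  ‖Matrix.toEuclideanCLM (𝕜 := ℝ) M‖

/-- The GAVE residual function `F(x) = A x − B |x| − b`. -/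
noncomputable def gaveF {n : ℕ} (A B : Matrix (Fin n) (Fin n) ℝ)
    (b : EuclideanSpace ℝ (Fin n)) (x : EuclideanSpace ℝ (Fin n)) : EuclideanSpace ℝ (Fin n) :=
  mulV A x - mulV B (vabs x) - b

/-- The AVE residual function `A x − |x| − b` (the GAVE with `B = I`). -/
noncomputable def aveF {n : ℕ} (A : Matrix (Fin n) (Fin n) ℝ)
    (b : EuclideanSpace ℝ (Fin n)) (x : EuclideanSpace ℝ (Fin n)) : EuclideanSpace ℝ (Fin n) :=
  mulV A x - vabs x - b

/-- A sequence converges linearly to `xs`: the distances to `xs` contract by a fixed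
factor `c < 1` at every step, and the sequence tends to `xs`. -/
def ConvergesLinearlyTo {n : ℕ} (x : ℕ → EuclideanSpace ℝ (Fin n))
    (xs : EuclideanSpace ℝ (Fin n)) : Prop :=
  (∃ c : ℝ, 0 ≤ c ∧ c < 1 ∧ ∀ k : ℕ, ‖x (k + 1) - xs‖ ≤ c * ‖x k - xs‖) ∧
    Tendsto x atTop (nhds xs)


/-!
Subtracting the equations for two solutions `x`, `y` and using `A = M - N` gives the fixed-point
identity `x - y = (Ω + M)⁻¹ ((Ω + N)(x - y) + B(|x| - |y|))`. Since `v ↦ |v|` is 1-Lipschitz this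
yields `‖x - y‖ ≤ ‖(Ω + M)⁻¹‖ (‖Ω + N‖ + ‖B‖) ‖x - y‖`, and the hypothesis on `‖(Ω + M)⁻¹‖` makes
the factor smaller than `1`, because the `θ`-term in it is nonnegative.
-/

section GAVE

variable {n : ℕ}

lemma norm_vabs_sub_vabs_le (x y : EuclideanSpace ℝ (Fin n)) :
    ‖vabs x - vabs y‖ ≤ ‖x - y‖ := by
  rw [EuclideanSpace.norm_eq, EuclideanSpace.norm_eq]
  gcongr with i
  simpa [vabs] using abs_abs_sub_abs_le_abs_sub (x i) (y i)

lemma spec_nonneg (M : Matrix (Fin n) (Fin n) ℝ) : 0 ≤ spec M :=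
  norm_nonneg _

lemma norm_mulV_le (M : Matrix (Fin n) (Fin n) ℝ) (x : EuclideanSpace ℝ (Fin n)) :
    ‖mulV M x‖ ≤ spec M * ‖x‖ :=
  (Matrix.toEuclideanCLM (𝕜 := ℝ) M).le_opNorm x

lemma mulV_sub (M : Matrix (Fin n) (Fin n) ℝ) (x y : EuclideanSpace ℝ (Fin n)) :
    mulV M (x - y) = mulV M x - mulV M y :=
  map_sub _ x y

lemma add_mulV (M N : Matrix (Fin n) (Fin n) ℝ) (x : EuclideanSpace ℝ (Fin n)) :
    mulV (M + N) x = mulV M x + mulV N x := by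
  simp [mulV]

lemma mulV_mulV (M N : Matrix (Fin n) (Fin n) ℝ) (x : EuclideanSpace ℝ (Fin n)) :
    mulV M (mulV N x) = mulV (M * N) x := by
  simp [mulV]

lemma mulV_nonsing_inv_mulV {P : Matrix (Fin n) (Fin n) ℝ} (hP : IsUnit P)
    (x : EuclideanSpace ℝ (Fin n)) : mulV P⁻¹ (mulV P x) = x := by
  rw [mulV_mulV, Matrix.nonsing_inv_mul _ ((Matrix.isUnit_iff_isUnit_det _).mp hP)]
  simp [mulV]

lemma mulV_sub_eq_of_gaveF_eq_gaveF {A B : Matrix (Fin n) (Fin n) ℝ}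
    {b x y : EuclideanSpace ℝ (Fin n)} (h : gaveF A B b x = gaveF A B b y) :
    mulV A (x - y) = mulV B (vabs x - vabs y) := by
  rw [mulV_sub, mulV_sub]
  simp only [gaveF, sub_left_inj] at h
  exact sub_eq_sub_iff_sub_eq_sub.mp h

lemma sub_eq_splitting_of_gaveF_eq_gaveF {A M N B : Matrix (Fin n) (Fin n) ℝ}
    (Ω : Matrix (Fin n) (Fin n) ℝ) (hA : A = M - N) (hP : IsUnit (Ω + M))
    {b x y : EuclideanSpace ℝ (Fin n)} (h : gaveF A B b x = gaveF A B b y) :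
    x - y = mulV (Ω + M)⁻¹ (mulV (Ω + N) (x - y) + mulV B (vabs x - vabs y)) := by
  have hsplit : Ω + M = (Ω + N) + A := by rw [hA]; abel
  rw [← mulV_sub_eq_of_gaveF_eq_gaveF h, ← add_mulV, ← hsplit, mulV_nonsing_inv_mulV hP]

lemma norm_sub_le_of_gaveF_eq_gaveF {A M N B : Matrix (Fin n) (Fin n) ℝ}
    (Ω : Matrix (Fin n) (Fin n) ℝ) (hA : A = M - N) (hP : IsUnit (Ω + M))
    {b x y : EuclideanSpace ℝ (Fin n)} (h : gaveF A B b x = gaveF A B b y) :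
    ‖x - y‖ ≤ spec (Ω + M)⁻¹ * (spec (Ω + N) + spec B) * ‖x - y‖ := by
  calc ‖x - y‖
      = ‖mulV (Ω + M)⁻¹ (mulV (Ω + N) (x - y) + mulV B (vabs x - vabs y))‖ := by
        rw [← sub_eq_splitting_of_gaveF_eq_gaveF Ω hA hP h]
    _ ≤ spec (Ω + M)⁻¹ * (spec (Ω + N) * ‖x - y‖ + spec B * ‖vabs x - vabs y‖) := by
        refine (norm_mulV_le _ _).trans (mul_le_mul_of_nonneg_left ?_ (spec_nonneg _))
        exact (norm_add_le _ _).trans (add_le_add (norm_mulV_le _ _) (norm_mulV_le _ _))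
    _ ≤ spec (Ω + M)⁻¹ * (spec (Ω + N) * ‖x - y‖ + spec B * ‖x - y‖) := by
        gcongr
        · exact spec_nonneg _
        · exact spec_nonneg _
        · exact norm_vabs_sub_vabs_le x y
    _ = spec (Ω + M)⁻¹ * (spec (Ω + N) + spec B) * ‖x - y‖ := by ring

theorem gaveF_injective_of_contraction {A M N B : Matrix (Fin n) (Fin n) ℝ}
    (Ω : Matrix (Fin n) (Fin n) ℝ) (b : EuclideanSpace ℝ (Fin n)) (hA : A = M - N)
    (hP : IsUnit (Ω + M)) (hcontr : spec (Ω + M)⁻¹ * (spec (Ω + N) + spec B) < 1) :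
    Function.Injective (gaveF A B b) := by
  intro x y h
  have hle := norm_sub_le_of_gaveF_eq_gaveF Ω hA hP h
  have hzero : ‖x - y‖ = 0 := by nlinarith [norm_nonneg (x - y)]
  exact sub_eq_zero.mp (norm_eq_zero.mp hzero)

lemma mul_lt_one_of_lt_one_div_add {a s t : ℝ} (ha : 0 ≤ a) (hs : 0 ≤ s) (ht : 0 ≤ t)
    (h : a < 1 / (t + s)) : a * s < 1 := by
  rcases hs.eq_or_lt with hs0 | hs0
  · simp [← hs0]
  · have hmul : a * (t + s) < 1 := (lt_div_iff₀ (by linarith)).mp h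
    nlinarith

end GAVE

theorem stmt18_general {n : ℕ} (A M N B Ω : Matrix (Fin n) (Fin n) ℝ)
    (b : EuclideanSpace ℝ (Fin n)) (hA : A = M - N) (θ : ℝ) (hθ0 : 0 ≤ θ)
    (hinv : IsUnit (Ω + M))
    (hcond : spec (Ω + M)⁻¹ <
      1 / (θ * (spec (Ω + M) + spec (Ω + N) + spec B) + spec (Ω + N) + spec B)) :
    ∀ xs ys : EuclideanSpace ℝ (Fin n),
      gaveF A B b xs = 0 → gaveF A B b ys = 0 → xs = ys := by
  have hθterm : 0 ≤ θ * (spec (Ω + M) + spec (Ω + N) + spec B) := by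
    have := spec_nonneg (Ω + M); have := spec_nonneg (Ω + N); have := spec_nonneg B
    positivity
  have hcontr : spec (Ω + M)⁻¹ * (spec (Ω + N) + spec B) < 1 := by
    refine mul_lt_one_of_lt_one_div_add (spec_nonneg _)
      (add_nonneg (spec_nonneg _) (spec_nonneg _)) hθterm ?_
    simpa only [add_assoc] using hcond
  intro xs ys hx hy
  exact gaveF_injective_of_contraction Ω b hA hinv hcontr (hx.trans hy.symm)

theorem stmt18 {n : ℕ} (A M N B Ω : Matrix (Fin n) (Fin n) ℝ)
    (b : EuclideanSpace ℝ (Fin n)) (hA : A = M - N) (θ : ℝ) (hθ0 : 0 ≤ θ) (hθ1 : θ < 1)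
    (hinv : IsUnit (Ω + M))
    (hcond : spec (Ω + M)⁻¹ <
      1 / (θ * (spec (Ω + M) + spec (Ω + N) + spec B) + spec (Ω + N) + spec B)) :
    ∀ xs ys : EuclideanSpace ℝ (Fin n),
      gaveF A B b xs = 0 → gaveF A B b ys = 0 → xs = ys :=
  stmt18_general A M N B Ω b hA θ hθ0 hinv hcond
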